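/- Let X be a pure k-dimensional simplicial complex on n vertices with complete (k-1)-skeleton. Then α(X) ≤ ϑ_k(X) ≤ n·(1 - deg_min(X)/λ_max(L↑_{k-1}(X))), where deg_min(X) is the minimal degree of a (k-1)-face and λ_max(L↑_{k-1}(X)) is the largest eigenvalue of the (k-1)-th up-Laplacian of X. -/

import Mathlib

open Finset Matrix

/-- The oriented incidence number `[F:K]` induced by the global linear order on
the vertices: it is `(-1)^j` if `K ⊆ F`, `F ∖ K = {x_j}` and `x_j` is the `j`-th
smallest element of `F`, and `0` otherwise. -/
def inc {V : Type} [DecidableEq V] [LinearOrder V] (F K : Finset V) : ℝ :=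
  if K ⊆ F ∧ F.card = K.card + 1 then
    ∑ x ∈ F \ K, (-1 : ℝ) ^ (K.filter (fun y => y < x)).card
  else 0

/-- An abstract simplicial complex on a vertex type `V`: a family of finite subsets
of `V` closed under taking subsets. -/
structure SC (V : Type) [DecidableEq V] where
  faces : Finset (Finset V)
  down_closed : ∀ ⦃F⦄, F ∈ faces → ∀ ⦃K : Finset V⦄, K ⊆ F → K ∈ faces

variable {V : Type} [Fintype V] [DecidableEq V] [LinearOrder V]

/-- The faces of cardinality `m` (i.e. of dimension `m-1`) of a complex. -/
def SC.dfaces (X : SC V) (m : ℕ) : Finset (Finset V) := X.faces.filter fun F => F.card = m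

/-- The faces of cardinality `m`, as a type (index set of the space `C^{m-1}` of
`(m-1)`-dimensional cochains). -/
abbrev Face (X : SC V) (m : ℕ) := {F : Finset V // F ∈ X.dfaces m}

/-- The matrix of the coboundary map `δ_{m-1}` from `(m-1)`-dimensional cochains
(functions on cardinality-`m` faces) to `m`-dimensional cochains, in the bases of
elementary cochains. -/
def deltaMat (X : SC V) (m : ℕ) : Matrix (Face X (m + 1)) (Face X m) ℝ :=
  fun H F => inc H.1 F.1

/-- The up-Laplacian `L↑_{m-1} = ∂_m δ_{m-1}` acting on `(m-1)`-dimensional cochains,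
where `∂ = δ*` is the adjoint (transpose) of the coboundary map. -/
def Lup (X : SC V) (m : ℕ) : Matrix (Face X m) (Face X m) ℝ :=
  (deltaMat X m)ᵀ * deltaMat X m

/-- The down-Laplacian `L↓_m = δ_{m-1} ∂_m` acting on `m`-dimensional cochains. -/
def Ldown (X : SC V) (m : ℕ) : Matrix (Face X (m + 1)) (Face X (m + 1)) ℝ :=
  deltaMat X m * (deltaMat X m)ᵀ

/-- The space of harmonicSp `i`-cochains `H_i = Z_i ∩ Z^i = ker ∂_i ∩ ker δ_i`. -/
def harmonicSp (X : SC V) (i : ℕ) : Submodule ℝ (Face X (i + 1) → ℝ) :=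
  LinearMap.ker (Matrix.mulVecLin (deltaMat X i)ᵀ) ⊓
    LinearMap.ker (Matrix.mulVecLin (deltaMat X (i + 1)))

/-- The type of all `k`-element subsets of `V`. -/
abbrev KSet (V : Type) [Fintype V] [DecidableEq V] (k : ℕ) := {F : Finset V // F.card = k}

/-- `ε_{F,F'} = [F : F ∩ F'] ⬝ [F' : F ∩ F']`. -/
def eps {V : Type} [DecidableEq V] [LinearOrder V] (F F' : Finset V) : ℝ :=
  inc F (F ∩ F') * inc F' (F ∩ F')

/-- The down-Laplacian `L↓_{k-1}` of the complete complex `K_n^k`, as a matrix indexed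
by all `k`-subsets of the vertex set: diagonal entries `k`, off-diagonal entries
`ε_{F,F'}` (which vanish unless `|F ∩ F'| = k-1`). -/
def Lc (V : Type) [Fintype V] [DecidableEq V] [LinearOrder V] (k : ℕ) :
    Matrix (KSet V k) (KSet V k) ℝ :=
  fun F F' => if F = F' then (k : ℝ) else eps F.1 F'.1

/-- `S` is an independent set of the pure `k`-dimensional complex `X`: it contains
no `k`-dimensional face of `X`. -/
def SC.IsIndep (X : SC V) (k : ℕ) (S : Finset V) : Prop :=
  ∀ H ∈ X.dfaces (k + 1), ¬ H ⊆ S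

/-- The independence number `α(X)` of a pure `k`-dimensional complex. -/
noncomputable def alphaNum (X : SC V) (k : ℕ) : ℕ :=
  sSup {m | ∃ S : Finset V, X.IsIndep k S ∧ S.card = m}

/-- `X` is a pure `k`-dimensional simplicial complex: all faces have dimension at
most `k` and every face is contained in a face of dimension `k`. -/
def SC.Pure (X : SC V) (k : ℕ) : Prop :=
  (∀ F ∈ X.faces, F.card ≤ k + 1) ∧ ∀ F ∈ X.faces, ∃ H ∈ X.dfaces (k + 1), F ⊆ H

/-- Feasibility for the primal semidefinite program defining `ϑ_k(X)`. -/
def thetaFeasible (X : SC V) (k : ℕ) (Y : Matrix (KSet V k) (KSet V k) ℝ) : Prop :=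
  Y.PosSemidef ∧ Matrix.trace Y = 1 ∧
  (∀ F F' : KSet V k, F.1 ∪ F'.1 ∈ X.dfaces (k + 1) → Y F F' = 0) ∧
  (∀ F F' : KSet V k, k + 2 ≤ (F.1 ∪ F'.1).card → Y F F' = 0) ∧
  (∀ F F' G G' : KSet V k, F.1 ∪ F'.1 = G.1 ∪ G'.1 →
    eps F.1 F'.1 * Y F F' = eps G.1 G'.1 * Y G G')

/-- The theta number `ϑ_k(X)` of a pure `k`-dimensional simplicial complex: the optimal
value of the semidefinite program maximizing `⟨L↓_{k-1}, Y⟩` over feasible `Y`. -/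
noncomputable def theta (X : SC V) (k : ℕ) : ℝ :=
  sSup {t | ∃ Y, thetaFeasible X k Y ∧ Matrix.trace (Lc V k * Y) = t}

/-- The complete `k`-dimensional complex on the vertex type `V`: all subsets of
cardinality at most `k+1` are faces. -/
def completeComplex (V : Type) [Fintype V] [DecidableEq V] (k : ℕ) : SC V :=
  ⟨univ.filter fun F => F.card ≤ k + 1, by
    intro F hF K hK
    simp only [mem_filter, mem_univ, true_and] at hF ⊢
    exact le_trans (card_le_card hK) hF⟩

/-- The empty complex (no faces at all), conventionally pure of any dimension. -/
def emptyComplex (V : Type) [DecidableEq V] : SC V :=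
  ⟨∅, by intro F hF; simp at hF⟩

/-- The largest eigenvalue of a matrix. -/
noncomputable def lambdaMax {ι : Type} [Fintype ι] (M : Matrix ι ι ℝ) : ℝ :=
  sSup {μ : ℝ | Module.End.HasEigenvalue (Matrix.mulVecLin M) μ}

/-- The smallest eigenvalue of a matrix. -/
noncomputable def lambdaMin {ι : Type} [Fintype ι] (M : Matrix ι ι ℝ) : ℝ :=
  sInf {μ : ℝ | Module.End.HasEigenvalue (Matrix.mulVecLin M) μ}

/-- The degree of a face `F`: the number of faces of one higher dimension containing it. -/
def SC.deg (X : SC V) (F : Finset V) : ℕ :=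
  ((X.dfaces (F.card + 1)).filter fun H => F ⊆ H).card

/-- The minimal degree of a `(k-1)`-dimensional face (a face of cardinality `k`). -/
noncomputable def degMin (X : SC V) (k : ℕ) : ℕ :=
  sInf {m | ∃ F ∈ X.dfaces k, m = X.deg F}

/-- The up-Laplacian `L↑_{k-1}(X)` extended by zeros to a matrix indexed by all
`k`-subsets of the vertex set. -/
def LupE (X : SC V) (k : ℕ) : Matrix (KSet V k) (KSet V k) ℝ :=
  fun F F' => ∑ H ∈ X.dfaces (k + 1), inc H F.1 * inc H F'.1

/-- The down-Laplacian `L↓_{k-1}(X)` extended by zeros to a matrix indexed by all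
`k`-subsets of the vertex set. -/
def LdownE (X : SC V) (k : ℕ) : Matrix (KSet V k) (KSet V k) ℝ :=
  fun F F' =>
    if F.1 ∈ X.faces ∧ F'.1 ∈ X.faces then ∑ K ∈ X.dfaces (k - 1), inc F.1 K * inc F'.1 K
    else 0

/-- The Lovász theta number of a graph given by an adjacency relation `adj` on a finite
vertex type, in its primal formulation. -/
noncomputable def thetaG {W : Type} [Fintype W] (adj : W → W → Prop) : ℝ :=
  sSup {t | ∃ Z : Matrix W W ℝ, Z.PosSemidef ∧ Matrix.trace Z = 1 ∧
    (∀ v w, adj v w → Z v w = 0) ∧ t = ∑ v, ∑ w, Z v w}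

/-!
Write `Lc = ∂∂ᵀ` for the down-Laplacian of the complete complex and `L↑ = δᵀδ` for the
up-Laplacian of `X`, both as matrices on all `k`-sets. Since `δ∂ = 0`, `Lc L↑ = L↑ Lc = 0`; on the
full simplex on `T` the Gram identity `∂∂ᵀ + δᵀδ = |T|` gives `(∂∂ᵀ)² = |T| ∂∂ᵀ`, so `Lc² = n Lc`.
Thus `Lc / n` is a projection and `L↑ ≤ λ_max` lives on its kernel, whence
`λ_max (n - Lc) - n L↑ ⪰ 0`. Pairing this with a feasible `Y` and using
`⟨L↑, Y⟩ = Σ_F deg F · Y_FF ≥ deg_min` (off-diagonal entries of `L↑` sit on pairs spanning a face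
of `X`, where `Y` vanishes) gives the upper bound. For the lower bound, the down-Laplacian `L_S`
of the full simplex on a maximum independent set `S`, scaled to trace one, is feasible, and
`L_S² = |S| L_S` gives it the value `|S| = α(X)`.
-/

lemma exists_eq_insert_of_card_union {α : Type*} [DecidableEq α] {F F' : Finset α}
    (hne : F ≠ F') (hcard : F.card = F'.card) (hu : (F ∪ F').card = F.card + 1) :
    ∃ a b K, a ≠ b ∧ a ∉ K ∧ b ∉ K ∧ insert a K = F ∧ insert b K = F' := by
  have hinter : (F ∩ F').card + 1 = F.card := by
    have := card_union_add_card_inter F F'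
    omega
  obtain ⟨a, ha, hF⟩ := exists_eq_insert_iff.2 ⟨inter_subset_left, hinter⟩
  obtain ⟨b, hb, hF'⟩ := exists_eq_insert_iff.2 ⟨inter_subset_right, hinter.trans hcard⟩
  refine ⟨a, b, _, fun hab => hne ?_, ha, hb, hF, hF'⟩
  subst hab
  exact hF.symm.trans hF'

lemma card_lt_card_union {α : Type*} [DecidableEq α] {F F' : Finset α} (hne : F ≠ F')
    (hcard : F.card = F'.card) : F.card < (F ∪ F').card := by
  refine card_lt_card (subset_union_left.ssubset_of_ne fun h => hne ?_)
  exact (eq_of_subset_of_card_le (h ▸ subset_union_right) hcard.le).symm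

section Faces

variable {V : Type} [DecidableEq V]

lemma SC.card_eq_of_mem_dfaces (X : SC V) {m : ℕ} {H : Finset V} (hH : H ∈ X.dfaces m) :
    H.card = m :=
  (mem_filter.1 hH).2

lemma SC.exists_subset_card_eq_of_mem_dfaces (X : SC V) {k : ℕ} {H : Finset V}
    (hH : H ∈ X.dfaces (k + 1)) : ∃ F ⊆ H, F.card = k :=
  exists_subset_card_eq (by rw [X.card_eq_of_mem_dfaces hH]; omega)

lemma SC.isIndep_of_card_le (X : SC V) {k : ℕ} {S : Finset V} (hS : S.card ≤ k) :
    X.IsIndep k S := fun H hH hHS => by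
  have := card_le_card hHS
  rw [X.card_eq_of_mem_dfaces hH] at this
  omega

lemma bddAbove_card_isIndep [Fintype V] (X : SC V) (k : ℕ) :
    BddAbove {m | ∃ S : Finset V, X.IsIndep k S ∧ S.card = m} :=
  ⟨Fintype.card V, by rintro _ ⟨S, -, rfl⟩; exact card_le_univ S⟩

lemma exists_isIndep_card_eq_alphaNum [Fintype V] (X : SC V) (k : ℕ) :
    ∃ S : Finset V, X.IsIndep k S ∧ S.card = alphaNum X k :=
  Nat.sSup_mem (s := {m | ∃ S : Finset V, X.IsIndep k S ∧ S.card = m})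
    ⟨0, ∅, X.isIndep_of_card_le (Nat.zero_le k), rfl⟩ (bddAbove_card_isIndep X k)

lemma le_alphaNum [Fintype V] (X : SC V) {k : ℕ} (hne : (X.dfaces (k + 1)).Nonempty) :
    k ≤ alphaNum X k := by
  obtain ⟨H, hH⟩ := hne
  obtain ⟨S, -, hS⟩ := X.exists_subset_card_eq_of_mem_dfaces hH
  exact le_csSup (bddAbove_card_isIndep X k) ⟨S, X.isIndep_of_card_le hS.le, hS⟩

end Faces

section Incidence

variable {V : Type} [DecidableEq V] [LinearOrder V]

lemma subset_and_card_eq_of_inc_ne_zero {F K : Finset V} (h : inc F K ≠ 0) :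
    K ⊆ F ∧ F.card = K.card + 1 := by
  by_contra hc
  exact h (if_neg hc)

lemma exists_eq_insert_of_inc_ne_zero {F K : Finset V} (h : inc F K ≠ 0) :
    ∃ x ∉ K, insert x K = F := by
  obtain ⟨hKF, hcard⟩ := subset_and_card_eq_of_inc_ne_zero h
  exact exists_eq_insert_iff.2 ⟨hKF, hcard.symm⟩

lemma inc_eq_zero_of_not_subset {F K : Finset V} (h : ¬ K ⊆ F) : inc F K = 0 :=
  if_neg fun h' => h h'.1

lemma inc_insert {K : Finset V} {x : V} (hx : x ∉ K) :
    inc (insert x K) K = (-1) ^ #{y ∈ K | y < x} := by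
  rw [inc, if_pos ⟨subset_insert x K, card_insert_of_notMem hx⟩, insert_sdiff_cancel hx,
    sum_singleton]

lemma inc_mul_self (F K : Finset V) :
    inc F K * inc F K = if K ⊆ F ∧ F.card = K.card + 1 then 1 else 0 := by
  split_ifs with h
  · obtain ⟨x, hx, rfl⟩ := exists_eq_insert_iff.2 ⟨h.1, h.2.symm⟩
    rw [inc_insert hx, ← pow_add, Even.neg_one_pow ⟨_, rfl⟩]
  · rw [inc, if_neg h, zero_mul]

lemma inc_insert_insert {K : Finset V} {a b : V} (hab : a ≠ b) (ha : a ∉ K) (hb : b ∉ K) :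
    inc (insert a (insert b K)) (insert b K)
      = (-1) ^ (#{y ∈ K | y < a} + if b < a then 1 else 0) := by
  rw [inc_insert (by simp [hab, ha]), filter_insert]
  split_ifs <;> simp [card_insert_of_notMem, hb]

/-- The local form of `∂ ∘ ∂ = 0`. -/
lemma inc_insert_insert_path_sum {K : Finset V} {a b : V} (hab : a ≠ b) (ha : a ∉ K)
    (hb : b ∉ K) :
    inc (insert a (insert b K)) (insert a K) * inc (insert a K) K
      + inc (insert a (insert b K)) (insert b K) * inc (insert b K) K = 0 := by
  rw [insert_comm a b K, inc_insert_insert hab.symm hb ha, ← insert_comm a b K,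
    inc_insert_insert hab ha hb, inc_insert ha, inc_insert hb]
  rcases hab.lt_or_gt with h | h <;> simp [h, h.not_gt, pow_add] <;> ring

lemma inc_insert_insert_mul {K : Finset V} {a b : V} (hab : a ≠ b) (ha : a ∉ K) (hb : b ∉ K) :
    inc (insert a (insert b K)) (insert a K) * inc (insert a (insert b K)) (insert b K)
      = -(inc (insert a K) K * inc (insert b K) K) := by
  rw [insert_comm a b K, inc_insert_insert hab.symm hb ha, ← insert_comm a b K,
    inc_insert_insert hab ha hb, inc_insert ha, inc_insert hb]
  rcases hab.lt_or_gt with h | h <;> simp [h, h.not_gt, pow_add] <;> ring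

lemma eps_eq_zero_of_card_ne {F F' : Finset V} (h : F.card ≠ (F ∩ F').card + 1) :
    eps F F' = 0 := by
  rw [eps, inc, if_neg (fun h' => h h'.2), zero_mul]

lemma inc_union_mul_inc_union {F F' : Finset V} (hne : F ≠ F') (hcard : F.card = F'.card) :
    inc (F ∪ F') F * inc (F ∪ F') F' = -eps F F' := by
  by_cases hu : (F ∪ F').card = F.card + 1
  · obtain ⟨a, b, K, hab, ha, hb, rfl, rfl⟩ := exists_eq_insert_of_card_union hne hcard hu
    have hinter : insert a K ∩ insert b K = K := by
      ext y; simp only [mem_inter, mem_insert]; constructor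
      · rintro ⟨rfl | h, rfl | h'⟩ <;> first | exact absurd rfl hab | assumption
      · intro h; exact ⟨Or.inr h, Or.inr h⟩
    have hunion : insert a K ∪ insert b K = insert a (insert b K) := by
      ext y; simp only [mem_union, mem_insert]; tauto
    rw [eps, hinter, hunion, inc_insert_insert_mul hab ha hb]
  · have := card_union_add_card_inter F F'
    rw [inc, if_neg (fun h => hu h.2), zero_mul, eps_eq_zero_of_card_ne (by omega), neg_zero]

lemma sum_powerset_inc_mul_inc_eq_ite {T F F' : Finset V} (hF : F ⊆ T) (hF' : F' ⊆ T)
    (hcard : F.card = F'.card) :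
    ∑ H ∈ T.powerset, inc H F * inc H F'
      = if F = F' then (T.card - F.card : ℝ) else -eps F F' := by
  split_ifs with h
  · subst h
    have hcofacets : ({H ∈ T.powerset | F ⊆ H ∧ H.card = F.card + 1} : Finset (Finset V))
        = (T \ F).image (insert · F) := by
      ext H
      simp only [mem_filter, mem_powerset, mem_image, mem_sdiff]
      constructor
      · rintro ⟨hHT, hFH, hcard⟩
        obtain ⟨x, hx, rfl⟩ := exists_eq_insert_iff.2 ⟨hFH, hcard.symm⟩
        exact ⟨x, ⟨hHT (mem_insert_self x F), hx⟩, rfl⟩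
      · rintro ⟨x, ⟨hxT, hx⟩, rfl⟩
        exact ⟨insert_subset hxT hF, subset_insert x F, card_insert_of_notMem hx⟩
    simp_rw [inc_mul_self]
    rw [sum_boole, hcofacets, card_image_of_injOn ((insert_inj_on F).mono (by simp)),
      card_sdiff_of_subset hF, Nat.cast_sub (card_le_card hF)]
  · rw [sum_eq_single_of_mem (F ∪ F') (mem_powerset.2 (union_subset hF hF')),
      inc_union_mul_inc_union h hcard]
    intro H _ hH
    by_contra hne
    obtain ⟨hFH, hHF⟩ := subset_and_card_eq_of_inc_ne_zero (left_ne_zero_of_mul hne)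
    obtain ⟨hF'H, -⟩ := subset_and_card_eq_of_inc_ne_zero (right_ne_zero_of_mul hne)
    have hlt := card_lt_card_union h hcard
    exact hH (eq_of_subset_of_card_le (union_subset hFH hF'H) (by omega)).symm

end Incidence

lemma sum_inc_mul_inc_eq_ite (F F' : Finset V) :
    ∑ K, inc F K * inc F' K = if F = F' then (F.card : ℝ) else eps F F' := by
  split_ifs with h
  · subst h
    have hfacets :
        ({K | K ⊆ F ∧ F.card = K.card + 1} : Finset (Finset V)) = F.image F.erase := by
      ext K
      simp only [mem_filter, mem_univ, true_and, mem_image]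
      constructor
      · rintro ⟨hKF, hcard⟩
        obtain ⟨x, hx, rfl⟩ := exists_eq_insert_iff.2 ⟨hKF, hcard.symm⟩
        exact ⟨x, mem_insert_self x K, erase_insert hx⟩
      · rintro ⟨x, hx, rfl⟩
        exact ⟨erase_subset x F, (card_erase_add_one hx).symm⟩
    simp_rw [inc_mul_self]
    rw [sum_boole, hfacets, card_image_of_injOn (erase_injOn F)]
  · refine Fintype.sum_eq_single (F ∩ F') fun K hK => ?_
    by_contra hne
    obtain ⟨hKF, hFK⟩ := subset_and_card_eq_of_inc_ne_zero (left_ne_zero_of_mul hne)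
    obtain ⟨hKF', hF'K⟩ := subset_and_card_eq_of_inc_ne_zero (right_ne_zero_of_mul hne)
    have hlt : K.card < (F ∩ F').card := card_lt_card ((subset_inter hKF hKF').ssubset_of_ne hK)
    have hinter : F ∩ F' = F := eq_of_subset_of_card_le inter_subset_left (by omega)
    exact h (eq_of_subset_of_card_le (hinter ▸ inter_subset_right) (by omega))

lemma sum_kset_inc_mul_inc_eq_zero (k : ℕ) (H K : Finset V) :
    ∑ F : KSet V k, inc H F.1 * inc F.1 K = 0 := by
  by_contra hsum
  obtain ⟨F₀, -, hF₀⟩ := exists_ne_zero_of_sum_ne_zero hsum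
  obtain ⟨b, hb, hbK⟩ := exists_eq_insert_of_inc_ne_zero (right_ne_zero_of_mul hF₀)
  obtain ⟨a, ha, haH⟩ := exists_eq_insert_of_inc_ne_zero (left_ne_zero_of_mul hF₀)
  rw [← hbK, mem_insert, not_or] at ha
  have hk : K.card + 1 = k := by rw [← F₀.2, ← hbK, card_insert_of_notMem hb]
  let Fa : KSet V k := ⟨insert a K, by rw [card_insert_of_notMem ha.2, hk]⟩
  let Fb : KSet V k := ⟨insert b K, by rw [card_insert_of_notMem hb, hk]⟩
  have hFab : Fa ≠ Fb := fun h => ha.1 (by simpa [Fa, Fb, ha.2] using congrArg (a ∈ ·.1) h)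
  rw [Fintype.sum_eq_add Fa Fb hFab fun F hF => ?_] at hsum
  · rw [← haH, ← hbK] at hsum
    exact hsum (inc_insert_insert_path_sum ha.1 ha.2 hb)
  by_contra hne
  obtain ⟨x, hx, hxK⟩ := exists_eq_insert_of_inc_ne_zero (right_ne_zero_of_mul hne)
  have hxH : x ∈ H := (subset_and_card_eq_of_inc_ne_zero (left_ne_zero_of_mul hne)).1
    (hxK ▸ mem_insert_self x K)
  rw [← haH, ← hbK, mem_insert, mem_insert] at hxH
  rcases hxH with rfl | rfl | hxK'
  · exact hF.1 (Subtype.ext hxK.symm)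
  · exact hF.2 (Subtype.ext hxK.symm)
  · exact hx hxK'

def boundaryMat (T : Finset V) (k : ℕ) : Matrix (KSet V k) (Finset V) ℝ :=
  fun F K => if F.1 ⊆ T then inc F.1 K else 0

def coboundaryMat (𝓗 : Finset (Finset V)) (k : ℕ) : Matrix (Finset V) (KSet V k) ℝ :=
  fun H F => if H ∈ 𝓗 then inc H F.1 else 0

lemma coboundaryMat_mul_boundaryMat {𝓗 : Finset (Finset V)} {T : Finset V} {k : ℕ}
    (h𝓗 : ∀ H ∈ 𝓗, H ⊆ T) : coboundaryMat 𝓗 k * boundaryMat T k = 0 := by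
  ext H K
  rw [mul_apply, Matrix.zero_apply]
  by_cases hH : H ∈ 𝓗
  · refine (sum_congr rfl fun F _ => ?_).trans (sum_kset_inc_mul_inc_eq_zero k H K)
    rw [coboundaryMat, boundaryMat, if_pos hH]
    split_ifs with hF
    · rfl
    · rw [inc_eq_zero_of_not_subset fun hFH => hF (hFH.trans (h𝓗 H hH)), zero_mul, zero_mul]
  · simp [coboundaryMat, hH]

lemma transpose_coboundaryMat_mul_apply (𝓗 : Finset (Finset V)) {k : ℕ} (F F' : KSet V k) :
    ((coboundaryMat 𝓗 k)ᵀ * coboundaryMat 𝓗 k) F F'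
      = ∑ H ∈ 𝓗, inc H F.1 * inc H F'.1 := by
  simp [mul_apply, coboundaryMat, ite_mul, mul_ite]

lemma boundaryMat_mul_transpose_apply (T : Finset V) {k : ℕ} (F F' : KSet V k) :
    (boundaryMat T k * (boundaryMat T k)ᵀ) F F'
      = if F.1 ⊆ T ∧ F'.1 ⊆ T then Lc V k F F' else 0 := by
  by_cases hF : F.1 ⊆ T <;> by_cases hF' : F'.1 ⊆ T <;>
    simp [mul_apply, boundaryMat, hF, hF', sum_inc_mul_inc_eq_ite, Lc, Subtype.ext_iff, F.2]

lemma boundaryMat_mul_transpose_add (T : Finset V) (k : ℕ) :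
    boundaryMat T k * (boundaryMat T k)ᵀ
        + (coboundaryMat T.powerset k)ᵀ * coboundaryMat T.powerset k
      = (T.card : ℝ) • diagonal fun F => if F.1 ⊆ T then 1 else 0 := by
  ext F F'
  rw [Matrix.add_apply, boundaryMat_mul_transpose_apply, transpose_coboundaryMat_mul_apply,
    Matrix.smul_apply, diagonal_apply]
  by_cases hF : F.1 ⊆ T
  · by_cases hF' : F'.1 ⊆ T
    · rw [sum_powerset_inc_mul_inc_eq_ite hF hF' (F.2.trans F'.2.symm), if_pos ⟨hF, hF'⟩, Lc]
      by_cases h : F = F'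
      · simp [h, hF', F'.2]
      · simp [h, Subtype.ext_iff.not.1 h]
    · rw [if_neg fun h => hF' h.2, if_neg fun (h : F = F') => hF' (h ▸ hF), zero_add, smul_zero]
      refine sum_eq_zero fun H hH => ?_
      rw [inc_eq_zero_of_not_subset fun h => hF' (h.trans (mem_powerset.1 hH)), mul_zero]
  · rw [if_neg fun h => hF h.1, zero_add, if_neg hF, ite_self, smul_zero]
    refine sum_eq_zero fun H hH => ?_
    rw [inc_eq_zero_of_not_subset fun h => hF (h.trans (mem_powerset.1 hH)), zero_mul]

lemma boundaryMat_mul_transpose_mul_self (T : Finset V) (k : ℕ) :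
    boundaryMat T k * (boundaryMat T k)ᵀ * (boundaryMat T k * (boundaryMat T k)ᵀ)
      = (T.card : ℝ) • (boundaryMat T k * (boundaryMat T k)ᵀ) := by
  set B := boundaryMat T k
  set C := coboundaryMat T.powerset k
  have hCB : C * B = 0 := coboundaryMat_mul_boundaryMat fun H hH => mem_powerset.1 hH
  have hPB : (diagonal fun F : KSet V k => if F.1 ⊆ T then (1 : ℝ) else 0) * B = B := by
    ext F K
    by_cases hF : F.1 ⊆ T <;> simp [B, boundaryMat, hF]
  have hB : B * Bᵀ * B = (T.card : ℝ) • B := by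
    calc B * Bᵀ * B = (B * Bᵀ + Cᵀ * C) * B := by
          rw [Matrix.add_mul, Matrix.mul_assoc Cᵀ, hCB, Matrix.mul_zero, add_zero]
      _ = (T.card : ℝ) • B := by rw [boundaryMat_mul_transpose_add, smul_mul, hPB]
  rw [← Matrix.mul_assoc, hB, smul_mul]

lemma Lc_eq_boundaryMat_mul_transpose (k : ℕ) :
    Lc V k = boundaryMat (univ : Finset V) k * (boundaryMat (univ : Finset V) k)ᵀ := by
  ext F F'
  rw [boundaryMat_mul_transpose_apply, if_pos ⟨subset_univ _, subset_univ _⟩]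

lemma LupE_eq_transpose_mul_coboundaryMat (X : SC V) (k : ℕ) :
    LupE X k = (coboundaryMat (X.dfaces (k + 1)) k)ᵀ * coboundaryMat (X.dfaces (k + 1)) k := by
  ext F F'
  rw [transpose_coboundaryMat_mul_apply, LupE]

lemma isHermitian_Lc (k : ℕ) : (Lc V k).IsHermitian := by
  have h := isHermitian_mul_conjTranspose_self (boundaryMat (univ : Finset V) k)
  rwa [conjTranspose_eq_transpose_of_trivial, ← Lc_eq_boundaryMat_mul_transpose] at h

lemma isHermitian_LupE (X : SC V) (k : ℕ) : (LupE X k).IsHermitian := by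
  have h := isHermitian_conjTranspose_mul_self (coboundaryMat (X.dfaces (k + 1)) k)
  rwa [conjTranspose_eq_transpose_of_trivial, ← LupE_eq_transpose_mul_coboundaryMat] at h

lemma Lc_mul_self (k : ℕ) : Lc V k * Lc V k = (Fintype.card V : ℝ) • Lc V k := by
  rw [Lc_eq_boundaryMat_mul_transpose, boundaryMat_mul_transpose_mul_self univ k, card_univ]

lemma Lc_mul_LupE (X : SC V) (k : ℕ) : Lc V k * LupE X k = 0 := by
  have h := coboundaryMat_mul_boundaryMat (𝓗 := X.dfaces (k + 1)) (k := k) fun H _ =>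
    subset_univ H
  rw [Lc_eq_boundaryMat_mul_transpose, LupE_eq_transpose_mul_coboundaryMat, Matrix.mul_assoc,
    ← Matrix.mul_assoc _ _ (coboundaryMat _ k), ← transpose_mul, h, transpose_zero,
    Matrix.zero_mul, Matrix.mul_zero]

lemma LupE_mul_Lc (X : SC V) (k : ℕ) : LupE X k * Lc V k = 0 := by
  have h := coboundaryMat_mul_boundaryMat (𝓗 := X.dfaces (k + 1)) (k := k) fun H _ =>
    subset_univ H
  rw [Lc_eq_boundaryMat_mul_transpose, LupE_eq_transpose_mul_coboundaryMat, Matrix.mul_assoc,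
    ← Matrix.mul_assoc (coboundaryMat _ k), h, Matrix.zero_mul, Matrix.mul_zero]

lemma LupE_apply_self (X : SC V) {k : ℕ} (F : KSet V k) : LupE X k F F = X.deg F.1 := by
  simp_rw [LupE, inc_mul_self]
  rw [sum_boole, SC.deg, F.2]
  congr 2
  refine filter_congr fun H hH => ?_
  rw [X.card_eq_of_mem_dfaces hH, and_iff_left rfl]

lemma LupE_apply_eq_zero (X : SC V) {k : ℕ} {F F' : KSet V k} (hne : F ≠ F')
    (hF : F.1 ∪ F'.1 ∉ X.dfaces (k + 1)) : LupE X k F F' = 0 := by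
  refine sum_eq_zero fun H hH => ?_
  by_contra h
  obtain ⟨hFH, hHF⟩ := subset_and_card_eq_of_inc_ne_zero (left_ne_zero_of_mul h)
  obtain ⟨hF'H, -⟩ := subset_and_card_eq_of_inc_ne_zero (right_ne_zero_of_mul h)
  have hlt := card_lt_card_union (Subtype.ext_iff.not.1 hne) (F.2.trans F'.2.symm)
  exact hF ((eq_of_subset_of_card_le (union_subset hFH hF'H) (by omega)).symm ▸ hH)

lemma eps_mul_Lc_apply {k : ℕ} (F F' : KSet V k) :
    eps F.1 F'.1 * Lc V k F F' = if (F.1 ∪ F'.1).card = k + 1 then 1 else 0 := by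
  have hsum := card_union_add_card_inter F.1 F'.1
  rw [F.2, F'.2] at hsum
  by_cases h : F = F'
  · subst h
    rw [eps_eq_zero_of_card_ne (by simp), zero_mul, union_self, F.2, if_neg (by omega)]
  · have hsq : ∀ x y : ℝ, x * y * (x * y) = x * x * (y * y) := fun x y => by ring
    rw [Lc, if_neg h, eps, hsq, inc_mul_self, inc_mul_self]
    simp only [inter_subset_left, inter_subset_right, true_and, F.2, F'.2]
    split_ifs <;> (try norm_num) <;> omega

lemma Lc_apply_eq_zero_of_card_union {k : ℕ} {F F' : KSet V k}
    (h : k + 2 ≤ (F.1 ∪ F'.1).card) : Lc V k F F' = 0 := by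
  have hsum := card_union_add_card_inter F.1 F'.1
  rw [F.2, F'.2] at hsum
  have hne : F ≠ F' := by
    rintro rfl
    rw [union_self, F.2] at h
    omega
  rw [Lc, if_neg hne, eps_eq_zero_of_card_ne (by rw [F.2]; omega)]

section Spectral

variable {ι : Type} [Fintype ι] [DecidableEq ι]

lemma setOf_hasEigenvalue_eq_spectrum (M : Matrix ι ι ℝ) :
    {μ | Module.End.HasEigenvalue M.mulVecLin μ} = spectrum ℝ M := by
  ext μ
  rw [Set.mem_ofPred_eq, Module.End.hasEigenvalue_iff_mem_spectrum, ← toLin'_apply',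
    spectrum_toLin']

lemma lambdaMax_eq_sSup_spectrum (M : Matrix ι ι ℝ) : lambdaMax M = sSup (spectrum ℝ M) := by
  rw [lambdaMax, setOf_hasEigenvalue_eq_spectrum]

lemma lambdaMax_submatrix_equiv {κ : Type} [Fintype κ] [DecidableEq κ] (M : Matrix ι ι ℝ)
    (e : κ ≃ ι) : lambdaMax (M.submatrix e e) = lambdaMax M := by
  have h : M.submatrix e e = reindexAlgEquiv ℝ ℝ e.symm M := by simp [reindex_apply]
  rw [lambdaMax_eq_sSup_spectrum, lambdaMax_eq_sSup_spectrum, h, AlgEquiv.spectrum_eq]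

open scoped MatrixOrder in
lemma Matrix.IsHermitian.posSemidef_lambdaMax_smul_one_sub {M : Matrix ι ι ℝ}
    (hM : M.IsHermitian) : (lambdaMax M • 1 - M).PosSemidef := by
  rw [← Algebra.algebraMap_eq_smul_one]
  refine le_algebraMap_of_spectrum_le (fun μ hμ => ?_) hM.isSelfAdjoint
  rw [lambdaMax_eq_sSup_spectrum]
  rw [hM.spectrum_real_eq_range_eigenvalues] at hμ ⊢
  exact le_csSup (Set.finite_range _).bddAbove hμ

lemma Matrix.IsHermitian.apply_le_lambdaMax {M : Matrix ι ι ℝ} (hM : M.IsHermitian) (i : ι) :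
    M i i ≤ lambdaMax M := by
  simpa using hM.posSemidef_lambdaMax_smul_one_sub.diag_nonneg (i := i)

open scoped MatrixOrder in
lemma Matrix.PosSemidef.trace_mul_nonneg {A B : Matrix ι ι ℝ} (hA : A.PosSemidef)
    (hB : B.PosSemidef) : 0 ≤ trace (A * B) := by
  obtain ⟨C, rfl⟩ := CStarAlgebra.nonneg_iff_eq_star_mul_self.mp hA.nonneg
  rw [Matrix.mul_assoc, trace_mul_comm, star_eq_conjTranspose]
  exact (hB.mul_mul_conjTranspose_same C).trace_nonneg

/-- `A / a` is a projection and `B` lives on its kernel: conjugating `b • 1 - B` by `a • 1 - A`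
gives `a • (b • (a • 1 - A) - a • B)`. -/
lemma posSemidef_smul_sub_smul_of_mul_eq_zero {A B : Matrix ι ι ℝ} {a b : ℝ} (ha : 0 < a)
    (hA : A.IsHermitian) (hAA : A * A = a • A) (hAB : A * B = 0) (hBA : B * A = 0)
    (hB : (b • 1 - B).PosSemidef) : (b • (a • 1 - A) - a • B).PosSemidef := by
  set Q := a • (1 : Matrix ι ι ℝ) - A
  have hQ : Qᴴ = Q := by
    simp only [Q, conjTranspose_sub, conjTranspose_smul, conjTranspose_one, hA.eq, star_trivial]
  have hconj : Qᴴ * (b • 1 - B) * Q = a • (b • Q - a • B) := by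
    simp only [hQ, Q, Matrix.sub_mul, Matrix.mul_sub, Matrix.smul_mul, Matrix.mul_smul,
      Matrix.one_mul, Matrix.mul_one, hAA, hAB, hBA, sub_self, sub_zero, smul_zero]
  have h := (hB.conjTranspose_mul_mul_same Q).smul (inv_nonneg.2 ha.le)
  rwa [hconj, smul_smul, inv_mul_cancel₀ ha.ne', one_smul] at h

end Spectral

lemma degMin_le_trace_LupE_mul {X : SC V} {k : ℕ}
    (hskel : ∀ F : Finset V, F.card ≤ k → F ∈ X.faces)
    {Y : Matrix (KSet V k) (KSet V k) ℝ} (hY : thetaFeasible X k Y) :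
    (degMin X k : ℝ) ≤ trace (LupE X k * Y) := by
  have hdeg : ∀ F : KSet V k, degMin X k ≤ X.deg F.1 := fun F =>
    Nat.sInf_le ⟨F.1, mem_filter.2 ⟨hskel F.1 F.2.le, F.2⟩, rfl⟩
  have hoff : ∀ F F', F' ≠ F → LupE X k F F' * Y F' F = 0 := by
    intro F F' hne
    by_cases hH : F.1 ∪ F'.1 ∈ X.dfaces (k + 1)
    · rw [hY.2.2.1 F' F (union_comm F.1 F'.1 ▸ hH), mul_zero]
    · rw [LupE_apply_eq_zero X hne.symm hH, zero_mul]
  calc (degMin X k : ℝ) = ∑ F, (degMin X k : ℝ) * Y F F := by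
        rw [← mul_sum, show ∑ F, Y F F = 1 from hY.2.1, mul_one]
    _ ≤ ∑ F, (X.deg F.1 : ℝ) * Y F F := sum_le_sum fun F _ =>
        mul_le_mul_of_nonneg_right (by exact_mod_cast hdeg F) hY.1.diag_nonneg
    _ = trace (LupE X k * Y) := by
        refine sum_congr rfl fun F _ => ?_
        rw [diag_apply, mul_apply, Fintype.sum_eq_single F (hoff F), LupE_apply_self]

lemma lambdaMax_Lup_eq_lambdaMax_LupE (X : SC V) {k : ℕ}
    (hskel : ∀ F : Finset V, F.card ≤ k → F ∈ X.faces) :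
    lambdaMax (Lup X k) = lambdaMax (LupE X k) := by
  let e : Face X k ≃ KSet V k := Equiv.subtypeEquivRight fun F =>
    ⟨fun h => (mem_filter.1 h).2, fun h => mem_filter.2 ⟨hskel F h.le, h⟩⟩
  rw [← lambdaMax_submatrix_equiv (LupE X k) e]
  congr 1
  ext G G'
  exact sum_coe_sort (X.dfaces (k + 1)) fun H => inc H G.1 * inc H G'.1

lemma lambdaMax_LupE_pos (X : SC V) {k : ℕ} (hne : (X.dfaces (k + 1)).Nonempty) :
    0 < lambdaMax (LupE X k) := by
  obtain ⟨H, hH⟩ := hne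
  obtain ⟨F, hFH, hF⟩ := X.exists_subset_card_eq_of_mem_dfaces hH
  have hdeg : 0 < X.deg F := card_pos.2 ⟨H, mem_filter.2 ⟨by rwa [hF], hFH⟩⟩
  have h := (isHermitian_LupE X k).apply_le_lambdaMax ⟨F, hF⟩
  rw [LupE_apply_self] at h
  exact lt_of_lt_of_le (by exact_mod_cast hdeg) h

theorem trace_Lc_mul_le_of_thetaFeasible (X : SC V) {k : ℕ}
    (hskel : ∀ F : Finset V, F.card ≤ k → F ∈ X.faces) (hne : (X.dfaces (k + 1)).Nonempty)
    {Y : Matrix (KSet V k) (KSet V k) ℝ} (hY : thetaFeasible X k Y) :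
    trace (Lc V k * Y)
      ≤ (Fintype.card V : ℝ) * (1 - (degMin X k : ℝ) / lambdaMax (Lup X k)) := by
  rw [lambdaMax_Lup_eq_lambdaMax_LupE X hskel]
  set μ := lambdaMax (LupE X k)
  have hμ : 0 < μ := lambdaMax_LupE_pos X hne
  have hn : 0 < (Fintype.card V : ℝ) := by
    obtain ⟨H, hH⟩ := hne
    have := card_le_univ H
    rw [X.card_eq_of_mem_dfaces hH] at this
    exact_mod_cast (by omega : 0 < Fintype.card V)
  have hM := posSemidef_smul_sub_smul_of_mul_eq_zero hn (isHermitian_Lc k) (Lc_mul_self k)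
    (Lc_mul_LupE X k) (LupE_mul_Lc X k) (isHermitian_LupE X k).posSemidef_lambdaMax_smul_one_sub
  have hM_Y := hM.trace_mul_nonneg hY.1
  simp only [Matrix.sub_mul, Matrix.smul_mul, Matrix.one_mul, trace_sub, trace_smul, hY.2.1,
    smul_eq_mul] at hM_Y
  have hdeg := degMin_le_trace_LupE_mul hskel hY
  rw [show (Fintype.card V : ℝ) * (1 - degMin X k / μ)
      = (μ * Fintype.card V - Fintype.card V * degMin X k) / μ by field_simp, le_div_iff₀ hμ]
  nlinarith

lemma trace_boundaryMat_mul_transpose (S : Finset V) (k : ℕ) :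
    trace (boundaryMat S k * (boundaryMat S k)ᵀ) = k * S.card.choose k := by
  have hcount : #{F : KSet V k | F.1 ⊆ S} = S.card.choose k := by
    rw [← card_powersetCard, ← card_map (Function.Embedding.subtype _)]
    congr 1
    ext A
    simp [mem_powersetCard, and_comm]
  simp only [trace, diag_apply, boundaryMat_mul_transpose_apply, and_self, Lc, if_true]
  rw [← sum_filter, sum_const, hcount, nsmul_eq_mul, mul_comm]

lemma trace_Lc_mul_boundaryMat_mul_transpose (S : Finset V) (k : ℕ) :
    trace (Lc V k * (boundaryMat S k * (boundaryMat S k)ᵀ)) = S.card * (k * S.card.choose k) := by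
  have h : trace (Lc V k * (boundaryMat S k * (boundaryMat S k)ᵀ))
      = trace (boundaryMat S k * (boundaryMat S k)ᵀ
          * (boundaryMat S k * (boundaryMat S k)ᵀ)) := by
    set L := boundaryMat S k * (boundaryMat S k)ᵀ
    have hL : ∀ F F', L F F' = if F.1 ⊆ S ∧ F'.1 ⊆ S then Lc V k F F' else 0 :=
      boundaryMat_mul_transpose_apply S
    simp only [trace, diag_apply, Matrix.mul_apply, hL]
    refine sum_congr rfl fun F _ => sum_congr rfl fun F' _ => ?_
    by_cases hF : F.1 ⊆ S <;> by_cases hF' : F'.1 ⊆ S <;> simp [hF, hF']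
  rw [h, boundaryMat_mul_transpose_mul_self, trace_smul, trace_boundaryMat_mul_transpose,
    smul_eq_mul]

lemma exists_thetaFeasible_trace_eq_card {X : SC V} {k : ℕ} (hk : 1 ≤ k) {S : Finset V}
    (hS : X.IsIndep k S) (hkS : k ≤ S.card) :
    ∃ Y, thetaFeasible X k Y ∧ trace (Lc V k * Y) = S.card := by
  set L := boundaryMat S k * (boundaryMat S k)ᵀ
  have hpos : (0 : ℝ) < k * S.card.choose k := by
    have := Nat.choose_pos hkS
    positivity
  set c := ((k : ℝ) * S.card.choose k)⁻¹
  have hc : c * (k * S.card.choose k) = 1 := inv_mul_cancel₀ hpos.ne'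
  have hY : ∀ F F', (c • L) F F' = c * if F.1 ⊆ S ∧ F'.1 ⊆ S then Lc V k F F' else 0 := by
    intro F F'
    rw [Matrix.smul_apply, show L F F' = _ from boundaryMat_mul_transpose_apply S F F', smul_eq_mul]
  have hunion : ∀ F F' : KSet V k, eps F.1 F'.1 * (c • L) F F'
      = c * if F.1 ∪ F'.1 ⊆ S ∧ (F.1 ∪ F'.1).card = k + 1 then 1 else 0 := by
    intro F F'
    rw [hY, mul_left_comm, mul_ite, mul_zero, eps_mul_Lc_apply]
    simp only [union_subset_iff, ite_and]
  refine ⟨c • L, ⟨?_, ?_, fun F F' hH => ?_, fun F F' h => ?_, fun F F' G G' h => ?_⟩, ?_⟩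
  · have hL := posSemidef_self_mul_conjTranspose (boundaryMat S k)
    rw [conjTranspose_eq_transpose_of_trivial] at hL
    exact hL.smul (inv_nonneg.2 hpos.le)
  · rw [trace_smul, trace_boundaryMat_mul_transpose, smul_eq_mul, hc]
  · rw [hY, if_neg fun h => hS _ hH (union_subset h.1 h.2), mul_zero]
  · rw [hY, Lc_apply_eq_zero_of_card_union h, ite_self, mul_zero]
  · rw [hunion, hunion, h]
  · rw [mul_smul_comm, trace_smul, trace_Lc_mul_boundaryMat_mul_transpose, smul_eq_mul,
      mul_left_comm, hc, mul_one]


theorem theta_le_ratio_bound_general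
    {V : Type} [Fintype V] [DecidableEq V] [LinearOrder V] (X : SC V) (k : ℕ)
    (hk : 1 ≤ k) (hskel : ∀ F : Finset V, F.card ≤ k → F ∈ X.faces)
    (hne : (X.dfaces (k + 1)).Nonempty) :
    (alphaNum X k : ℝ) ≤ theta X k ∧
    theta X k ≤ (Fintype.card V : ℝ) * (1 - (degMin X k : ℝ) / lambdaMax (Lup X k)) := by
  have hbound : ∀ t ∈ {t | ∃ Y, thetaFeasible X k Y ∧ trace (Lc V k * Y) = t},
      t ≤ (Fintype.card V : ℝ) * (1 - (degMin X k : ℝ) / lambdaMax (Lup X k)) := by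
    rintro t ⟨Y, hY, rfl⟩
    exact trace_Lc_mul_le_of_thetaFeasible X hskel hne hY
  obtain ⟨S, hS, hScard⟩ := exists_isIndep_card_eq_alphaNum X k
  obtain ⟨Y, hY, hYS⟩ := exists_thetaFeasible_trace_eq_card hk hS (hScard ▸ le_alphaNum X hne)
  rw [← hScard]
  exact ⟨le_csSup ⟨_, hbound⟩ ⟨Y, hY, hYS⟩, csSup_le ⟨_, Y, hY, hYS⟩ hbound⟩

/-- For a pure `k`-dimensional complex `X` on `n` vertices with complete
`(k-1)`-skeleton, `α(X) ≤ ϑ_k(X) ≤ n (1 − deg_min(X)/λ_max(L↑_{k-1}(X)))`, the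
higher-dimensional analog of Hoffman's ratio bound. -/
theorem theta_le_ratio_bound
    {V : Type} [Fintype V] [DecidableEq V] [LinearOrder V] (X : SC V) (k : ℕ)
    (hk : 1 ≤ k) (hkn : k ≤ Fintype.card V) (hpure : X.Pure k)
    (hskel : ∀ F : Finset V, F.card ≤ k → F ∈ X.faces)
    (hne : (X.dfaces (k + 1)).Nonempty) :
    (alphaNum X k : ℝ) ≤ theta X k ∧
    theta X k ≤ (Fintype.card V : ℝ) * (1 - (degMin X k : ℝ) / lambdaMax (Lup X k)) :=
  theta_le_ratio_bound_general X k hk hskel hne
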